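/- arXiv:1607.00881 — 2 statements merged into one kernel-verified Lean document; each statement's English description precedes it below -/
import Mathlib

section
/- Let H be a Hermitian m×m complex Hamiltonian, ρ0 a density matrix on ℂ^m, ρ(t) = exp(−iHt/ħ) ρ0 exp(iHt/ħ), and P an orthogonal projection commuting with H. Set σ^N(t) = P ρ(t) P, δ_N = ‖ρ0 − σ^N(0)‖_F², P_N = tr(σ^N(0)), and assume P_N > 0, with normalization σ̃^N(t) = σ^N(t)/P_N. Then for every t ∈ ℝ: ‖ρ(t) − ρ0‖_F ≤ 2√δ_N + P_N · ‖σ̃^N(t) − σ̃^N(0)‖_F. -/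
/-! Since `P` commutes with `H`, it commutes with the propagator `U = exp(-iHt/ℏ)`, so
`σ(t) = U σ(0) U†` and
`ρ(t) - ρ0 = U (ρ0 - σ(0)) U† + (σ(t) - σ(0)) + (σ(0) - ρ0)`.
The Frobenius norm is unitarily invariant, so the outer terms both have norm `√δ_N`, and the middle
term is `P_N (σ̃(t) - σ̃(0))`. -/

open Matrix MeasureTheory Real
open scoped Classical ComplexOrder

/-- The positive semidefinite square root of a matrix (junk value `0` if the matrix is not
positive semidefinite). -/
noncomputable def matSqrt {n : ℕ} (A : Matrix (Fin n) (Fin n) ℂ) : Matrix (Fin n) (Fin n) ℂ :=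
  if h : A.PosSemidef then
    (h.1.eigenvectorUnitary : Matrix (Fin n) (Fin n) ℂ) *
      diagonal ((↑) ∘ (√·) ∘ h.1.eigenvalues) *
      (star h.1.eigenvectorUnitary : Matrix (Fin n) (Fin n) ℂ)
  else 0

/-- The unitary time evolution `exp(-iHt/h) A exp(iHt/h)`. -/
noncomputable def evol {n : ℕ} (ℏ : ℝ) (H A : Matrix (Fin n) (Fin n) ℂ) (t : ℝ) :
    Matrix (Fin n) (Fin n) ℂ :=
  NormedSpace.exp ((-(Complex.I * t / ℏ)) • H) * A * NormedSpace.exp ((Complex.I * t / ℏ) • H)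

/-- The Frobenius (Hilbert–Schmidt) norm `√(tr(A†A))` of a matrix. -/
noncomputable def frobNorm {n : ℕ} (A : Matrix (Fin n) (Fin n) ℂ) : ℝ :=
  Real.sqrt (((Aᴴ * A).trace).re)

namespace Matrix

variable {n 𝔸 𝕜 : Type*} [Fintype n] [DecidableEq n]

/-- Matrix version of `NormedSpace.exp_mem_unitary_of_mem_skewAdjoint`, which needs a norm on
matrices. -/
theorem exp_mem_unitary_of_mem_skewAdjoint [NormedRing 𝔸] [NormedAlgebra ℚ 𝔸] [CompleteSpace 𝔸]
    [StarRing 𝔸] [ContinuousStar 𝔸] {A : Matrix n n 𝔸} (hA : A ∈ skewAdjoint _) :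
    NormedSpace.exp A ∈ unitary (Matrix n n 𝔸) := by
  rw [Unitary.mem_iff, star_eq_conjTranspose, ← exp_conjTranspose, ← star_eq_conjTranspose,
    skewAdjoint.mem_iff.mp hA, ← exp_add_of_commute _ _ (Commute.refl A).neg_left,
    ← exp_add_of_commute _ _ (Commute.refl A).neg_right, neg_add_cancel, add_neg_cancel,
    NormedSpace.exp_zero, and_self]

variable [RCLike 𝕜] {H : Matrix n n 𝕜}

theorem IsHermitian.exp_smul_mem_unitary (hH : H.IsHermitian) {c : 𝕜} (hc : c ∈ skewAdjoint 𝕜) :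
    NormedSpace.exp (c • H) ∈ unitary (Matrix n n 𝕜) :=
  exp_mem_unitary_of_mem_skewAdjoint (hH.isSelfAdjoint.smul_mem_skewAdjoint hc)

theorem IsHermitian.star_exp_smul (hH : H.IsHermitian) (c : 𝕜) :
    star (NormedSpace.exp (c • H)) = NormedSpace.exp (star c • H) := by
  rw [star_eq_conjTranspose, ← exp_conjTranspose, conjTranspose_smul, hH.eq]

end Matrix

section Frobenius

attribute [local instance] Matrix.frobeniusNormedAddCommGroup Matrix.frobeniusNormedSpace

theorem frobNorm_eq_norm {n : ℕ} (A : Matrix (Fin n) (Fin n) ℂ) : frobNorm A = ‖A‖ := by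
  rw [frobNorm, Matrix.frobenius_norm_def, ← Real.sqrt_eq_rpow, trace, Finset.sum_comm]
  simp only [diag_apply, mul_apply, conjTranspose_apply, RCLike.star_def,
    ← Complex.normSq_eq_conj_mul_self, Complex.normSq_eq_norm_sq, Complex.ofReal_pow,
    Complex.re_sum, rpow_ofNat]
  norm_cast

theorem frobNorm_nonneg {n : ℕ} (A : Matrix (Fin n) (Fin n) ℂ) : 0 ≤ frobNorm A :=
  Real.sqrt_nonneg _

theorem frobNorm_add_le {n : ℕ} (A B : Matrix (Fin n) (Fin n) ℂ) :
    frobNorm (A + B) ≤ frobNorm A + frobNorm B := by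
  simpa only [frobNorm_eq_norm] using norm_add_le A B

theorem frobNorm_sub_comm {n : ℕ} (A B : Matrix (Fin n) (Fin n) ℂ) :
    frobNorm (A - B) = frobNorm (B - A) := by
  simpa only [frobNorm_eq_norm] using norm_sub_rev A B

theorem frobNorm_smul {n : ℕ} (c : ℂ) (A : Matrix (Fin n) (Fin n) ℂ) :
    frobNorm (c • A) = ‖c‖ * frobNorm A := by
  simpa only [frobNorm_eq_norm] using norm_smul c A

end Frobenius

theorem frobNorm_unitary_conj {n : ℕ} {U : Matrix (Fin n) (Fin n) ℂ}
    (hU : U ∈ unitary (Matrix (Fin n) (Fin n) ℂ)) (A : Matrix (Fin n) (Fin n) ℂ) :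
    frobNorm (U * A * star U) = frobNorm A := by
  have hUU : Uᴴ * U = 1 := Unitary.star_mul_self_of_mem hU
  have hconj : (U * A * Uᴴ)ᴴ * (U * A * Uᴴ) = U * (Aᴴ * A) * Uᴴ := by
    simp only [conjTranspose_mul, conjTranspose_conjTranspose, Matrix.mul_assoc]
    rw [← Matrix.mul_assoc Uᴴ U, hUU, Matrix.one_mul]
  rw [frobNorm, frobNorm, star_eq_conjTranspose, hconj, trace_mul_cycle, ← Matrix.mul_assoc, hUU,
    Matrix.one_mul]

section Evolution

variable {n : ℕ} (ℏ : ℝ) (H : Matrix (Fin n) (Fin n) ℂ)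

theorem evol_zero (A : Matrix (Fin n) (Fin n) ℂ) : evol ℏ H A 0 = A := by
  simp [evol]

theorem evol_sub (A B : Matrix (Fin n) (Fin n) ℂ) (t : ℝ) :
    evol ℏ H (A - B) t = evol ℏ H A t - evol ℏ H B t := by
  simp only [evol, Matrix.mul_sub, Matrix.sub_mul]

theorem mul_evol_mul_of_commute {P Q : Matrix (Fin n) (Fin n) ℂ} (hP : Commute P H)
    (hQ : Commute Q H) (A : Matrix (Fin n) (Fin n) ℂ) (t : ℝ) :
    P * evol ℏ H A t * Q = evol ℏ H (P * A * Q) t := by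
  have hPE := ((hP.smul_right (-(Complex.I * t / ℏ))).exp_right).eq
  have hQE := ((hQ.smul_right (Complex.I * t / ℏ)).exp_right).eq
  simp only [evol, Matrix.mul_assoc]
  rw [hQE, ← Matrix.mul_assoc P, hPE, Matrix.mul_assoc]

theorem frobNorm_evol {H : Matrix (Fin n) (Fin n) ℂ} (hH : H.IsHermitian)
    (A : Matrix (Fin n) (Fin n) ℂ) (t : ℝ) : frobNorm (evol ℏ H A t) = frobNorm A := by
  have hc : -(Complex.I * t / ℏ) ∈ skewAdjoint ℂ := by
    rw [skewAdjoint.mem_iff]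
    simp [neg_div]
  have hstar : star (NormedSpace.exp ((-(Complex.I * t / ℏ)) • H)) =
      NormedSpace.exp ((Complex.I * t / ℏ) • H) := by
    rw [hH.star_exp_smul, skewAdjoint.mem_iff.mp hc, neg_neg]
  rw [evol, ← hstar, frobNorm_unitary_conj (hH.exp_smul_mem_unitary hc)]

end Evolution

theorem triangle_inequality_relevant_states_general {m : ℕ} (ℏ : ℝ)
    (H ρ0 : Matrix (Fin m) (Fin m) ℂ)
    (hH : H.IsHermitian)
    (P : Matrix (Fin m) (Fin m) ℂ)
    (hPH : P * H = H * P)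
    (σN : ℝ → Matrix (Fin m) (Fin m) ℂ) (hσN : ∀ t, σN t = P * evol ℏ H ρ0 t * P)
    (δN : ℝ) (hδN : δN = (frobNorm (ρ0 - σN 0)) ^ 2)
    (PN : ℝ) (hPNpos : 0 < PN)
    (σNt : ℝ → Matrix (Fin m) (Fin m) ℂ)
    (hσNt : ∀ t, σNt t = ((PN : ℂ))⁻¹ • σN t) :
    ∀ t : ℝ, frobNorm (evol ℏ H ρ0 t - ρ0) ≤
      2 * Real.sqrt δN + PN * frobNorm (σNt t - σNt 0) := by
  intro t
  have hσt : σN t = evol ℏ H (σN 0) t := by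
    rw [hσN, hσN, evol_zero, mul_evol_mul_of_commute ℏ H hPH hPH]
  have hδ : Real.sqrt δN = frobNorm (ρ0 - σN 0) := by
    rw [hδN, Real.sqrt_sq (frobNorm_nonneg _)]
  have hscale : PN * frobNorm (σNt t - σNt 0) = frobNorm (σN t - σN 0) := by
    rw [hσNt, hσNt, ← smul_sub, frobNorm_smul, norm_inv, Complex.norm_real, Real.norm_of_nonneg
      hPNpos.le, mul_inv_cancel_left₀ hPNpos.ne']
  calc frobNorm (evol ℏ H ρ0 t - ρ0)
      = frobNorm (evol ℏ H (ρ0 - σN 0) t + (σN t - σN 0) + (σN 0 - ρ0)) := by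
        rw [evol_sub, ← hσt]; abel_nf
    _ ≤ frobNorm (evol ℏ H (ρ0 - σN 0) t) + frobNorm (σN t - σN 0) + frobNorm (σN 0 - ρ0) :=
        (frobNorm_add_le _ _).trans (add_le_add_left (frobNorm_add_le _ _) _)
    _ = 2 * Real.sqrt δN + PN * frobNorm (σNt t - σNt 0) := by
        rw [frobNorm_evol ℏ hH, frobNorm_sub_comm (σN 0), hδ, hscale]; ring

theorem triangle_inequality_relevant_states {m : ℕ} (ℏ : ℝ) (hℏ : 0 < ℏ)
    (H ρ0 : Matrix (Fin m) (Fin m) ℂ)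
    (hH : H.IsHermitian) (hρ0 : ρ0.PosSemidef) (htr : ρ0.trace = 1)
    (P : Matrix (Fin m) (Fin m) ℂ)
    (hP : P.IsHermitian) (hProj : P * P = P) (hPH : P * H = H * P)
    (σN : ℝ → Matrix (Fin m) (Fin m) ℂ) (hσN : ∀ t, σN t = P * evol ℏ H ρ0 t * P)
    (δN : ℝ) (hδN : δN = (frobNorm (ρ0 - σN 0)) ^ 2)
    (PN : ℝ) (hPN : PN = ((σN 0).trace).re) (hPNpos : 0 < PN)
    (σNt : ℝ → Matrix (Fin m) (Fin m) ℂ)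
    (hσNt : ∀ t, σNt t = ((PN : ℂ))⁻¹ • σN t) :
    ∀ t : ℝ, frobNorm (evol ℏ H ρ0 t - ρ0) ≤
      2 * Real.sqrt δN + PN * frobNorm (σNt t - σNt 0) :=
  triangle_inequality_relevant_states_general ℏ H ρ0 hH P hPH σN hσN δN hδN PN hPNpos σNt hσNt
end

section
/- Let H be a Hermitian n×n complex Hamiltonian, ħ > 0, λ ∈ ℝ, let ρ0 be a density matrix and W ∈ M_n(ℂ) a matrix with WW† = ρ0 (for instance W = √ρ0). Consider the curve γ(t) = exp(−it(H−λI)/ħ)·W in M_n(ℂ). Then for every t, the Frobenius norm of the derivative satisfies ‖γ′(t)‖_F = (1/ħ)·√(tr((H−λI)² ρ0)); in particular, for λ = tr(Hρ0) one has ‖γ′(t)‖_F = ΔE_{ρ0}/ħ, where ΔE_{ρ0} = √(tr(H²ρ0) − tr(Hρ0)²). Consequently the length of γ on [0,t] equals t·√(tr((H−λI)²ρ0))/ħ. -/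
/-!
Write `A = H - λ` and `B = -(i/ℏ) A`. Since `A` is Hermitian, `B` is skew-Hermitian, so
`U t = exp (t B)` is unitary and `γ t = U t W` has derivative `γ' t = U t B W`. Unitarity of `U t`
and cyclicity of the trace give `‖γ' t‖_F² = tr (Bᴴ B W Wᴴ) = tr (A² ρ0) / ℏ²`, independent of `t`;
the length of `γ` on `[0, t]` is therefore `t` times this constant speed.
-/

open Matrix Real
open scoped ComplexOrder

attribute [local instance] Matrix.frobeniusNormedAddCommGroup Matrix.frobeniusNormedSpace

open NormedSpace

namespace Matrix

variable {l m p : Type*} [Fintype l] [Fintype m] [Fintype p]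

theorem conjTranspose_exp_mul_exp_of_conjTranspose_eq_neg [DecidableEq m] {𝔸 : Type*}
    [NormedRing 𝔸] [NormedAlgebra ℚ 𝔸] [CompleteSpace 𝔸] [StarRing 𝔸] [ContinuousStar 𝔸]
    {B : Matrix m m 𝔸} (hB : Bᴴ = -B) : (exp B)ᴴ * exp B = 1 := by
  rw [← exp_conjTranspose, hB, ← exp_add_of_commute _ _ (Commute.refl B).neg_left,
    neg_add_cancel, NormedSpace.exp_zero]

theorem trace_conjTranspose_mul_self_of_isometry [DecidableEq m] {R : Type*} [CommSemiring R]
    [StarRing R] {U : Matrix l m R} (hU : Uᴴ * U = 1) (B : Matrix m m R) (W : Matrix m p R) :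
    ((U * B * W)ᴴ * (U * B * W)).trace = (Bᴴ * B * (W * Wᴴ)).trace := by
  have h : (U * B * W)ᴴ * (U * B * W) = Wᴴ * (Bᴴ * B * W) := by
    simp only [conjTranspose_mul, Matrix.mul_assoc]
    rw [← Matrix.mul_assoc Uᴴ U, hU, Matrix.one_mul]
  rw [h, trace_mul_comm, Matrix.mul_assoc]

theorem trace_conjTranspose_mul_self_exp_smul_mul_mul [DecidableEq m] {𝕜 : Type*} [RCLike 𝕜]
    {B : Matrix m m 𝕜} (hB : Bᴴ = -B) (t : ℝ) (W : Matrix m p 𝕜) :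
    ((exp (t • B) * B * W)ᴴ * (exp (t • B) * B * W)).trace = (Bᴴ * B * (W * Wᴴ)).trace := by
  have hskew : (t • B)ᴴ = -(t • B) := by rw [conjTranspose_smul, hB, star_trivial, smul_neg]
  have hU : (exp (t • B))ᴴ * exp (t • B) = 1 :=
    conjTranspose_exp_mul_exp_of_conjTranspose_eq_neg hskew
  exact trace_conjTranspose_mul_self_of_isometry hU B W

theorem trace_smul_conjTranspose_mul_smul {𝕜 : Type*} [RCLike 𝕜] (c : 𝕜) (A ρ : Matrix m m 𝕜) :
    ((c • A)ᴴ * (c • A) * ρ).trace = ‖c‖ ^ 2 • (Aᴴ * A * ρ).trace := by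
  rw [conjTranspose_smul, smul_mul_smul_comm, smul_mul_assoc, trace_smul, RCLike.star_def,
    RCLike.conj_mul, RCLike.real_smul_eq_coe_smul (K := 𝕜), RCLike.ofReal_pow]

theorem trace_sub_smul_one_mul_sub_smul_one_mul [DecidableEq m] {R : Type*} [CommRing R]
    (H ρ : Matrix m m R) (c : R) :
    ((H - c • 1) * (H - c • 1) * ρ).trace
      = (H * H * ρ).trace - 2 * c * (H * ρ).trace + c ^ 2 * ρ.trace := by
  simp only [Matrix.sub_mul, Matrix.mul_sub, Matrix.smul_mul, Matrix.mul_smul, Matrix.one_mul,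
    Matrix.mul_one, trace_sub, trace_smul, smul_eq_mul]
  ring

end Matrix

theorem speed_of_evolution_curve_general {n : ℕ} (ℏ : ℝ) (hℏ : 0 < ℏ) (lam : ℝ)
    (H ρ0 W : Matrix (Fin n) (Fin n) ℂ)
    (hH : H.IsHermitian) (htr : ρ0.trace = 1)
    (hW : W * Wᴴ = ρ0)
    (γ : ℝ → Matrix (Fin n) (Fin n) ℂ)
    (hγ : ∀ t : ℝ, γ t = NormedSpace.exp
      ((-(Complex.I * t / ℏ)) • (H - (lam : ℂ) • (1 : Matrix (Fin n) (Fin n) ℂ))) * W)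
    (γ' : ℝ → Matrix (Fin n) (Fin n) ℂ)
    (hγ' : ∀ s : ℝ, HasDerivAt γ (γ' s) s) :
    (∀ t : ℝ, Real.sqrt ((((γ' t)ᴴ * γ' t).trace).re) =
      (1 / ℏ) * Real.sqrt ((((H - (lam : ℂ) • 1) * (H - (lam : ℂ) • 1) * ρ0).trace).re)) ∧
    ((lam : ℂ) = (H * ρ0).trace →
      ∀ t : ℝ, Real.sqrt ((((γ' t)ᴴ * γ' t).trace).re) =
        Real.sqrt (((H * H * ρ0).trace).re - (((H * ρ0).trace).re) ^ 2) / ℏ) ∧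
    (∀ t : ℝ, 0 ≤ t →
      ∫ s in (0 : ℝ)..t, Real.sqrt ((((γ' s)ᴴ * γ' s).trace).re) =
        t * Real.sqrt ((((H - (lam : ℂ) • 1) * (H - (lam : ℂ) • 1) * ρ0).trace).re) / ℏ) := by
  let : NormedRing (Matrix (Fin n) (Fin n) ℂ) := Matrix.frobeniusNormedRing
  let : NormedAlgebra ℝ (Matrix (Fin n) (Fin n) ℂ) := Matrix.frobeniusNormedAlgebra
  set A := H - (lam : ℂ) • (1 : Matrix (Fin n) (Fin n) ℂ)
  set c : ℂ := -(Complex.I / ℏ)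
  have hA : Aᴴ = A := by simp [A, hH.eq]
  have hc : ‖c‖ = 1 / ℏ := by simp [c, abs_of_pos hℏ]
  have hskew : (c • A)ᴴ = -(c • A) := by
    rw [conjTranspose_smul, hA, ← neg_smul]
    simp [c, Complex.conj_ofReal, neg_div]
  have hγ'_eq : ∀ t : ℝ, γ' t = exp (t • c • A) * (c • A) * W := by
    obtain rfl : γ = fun s : ℝ => exp (s • c • A) * W := by
      funext s
      rw [hγ s, ← Complex.coe_smul, smul_smul]
      congr 3
      simp only [c]
      ring
    exact fun t => (hγ' t).unique ((hasDerivAt_exp_smul_const _ t).mul_const W)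
  have speed : ∀ t : ℝ, Real.sqrt ((((γ' t)ᴴ * γ' t).trace).re) =
      (1 / ℏ) * Real.sqrt (((A * A * ρ0).trace).re) := by
    intro t
    rw [hγ'_eq, trace_conjTranspose_mul_self_exp_smul_mul_mul hskew, hW,
      trace_smul_conjTranspose_mul_smul, hA, Complex.smul_re, smul_eq_mul,
      Real.sqrt_mul (sq_nonneg _), Real.sqrt_sq (norm_nonneg _), hc]
  refine ⟨speed, fun hlam t => ?_, fun t _ => ?_⟩
  · have hvar : (A * A * ρ0).trace = (H * H * ρ0).trace - (lam : ℂ) ^ 2 := by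
      rw [trace_sub_smul_one_mul_sub_smul_one_mul, ← hlam, htr]
      ring
    rw [speed, hvar, ← hlam, Complex.sub_re, ← Complex.ofReal_pow, Complex.ofReal_re,
      Complex.ofReal_re, one_div_mul_eq_div]
  · simp only [speed, intervalIntegral.integral_const, sub_zero, smul_eq_mul]
    ring

theorem speed_of_evolution_curve {n : ℕ} (ℏ : ℝ) (hℏ : 0 < ℏ) (lam : ℝ)
    (H ρ0 W : Matrix (Fin n) (Fin n) ℂ)
    (hH : H.IsHermitian) (hρ0 : ρ0.PosSemidef) (htr : ρ0.trace = 1)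
    (hW : W * Wᴴ = ρ0)
    (γ : ℝ → Matrix (Fin n) (Fin n) ℂ)
    (hγ : ∀ t : ℝ, γ t = NormedSpace.exp
      ((-(Complex.I * t / ℏ)) • (H - (lam : ℂ) • (1 : Matrix (Fin n) (Fin n) ℂ))) * W)
    (γ' : ℝ → Matrix (Fin n) (Fin n) ℂ)
    (hγ' : ∀ s : ℝ, HasDerivAt γ (γ' s) s) :
    (∀ t : ℝ, Real.sqrt ((((γ' t)ᴴ * γ' t).trace).re) =
      (1 / ℏ) * Real.sqrt ((((H - (lam : ℂ) • 1) * (H - (lam : ℂ) • 1) * ρ0).trace).re)) ∧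
    ((lam : ℂ) = (H * ρ0).trace →
      ∀ t : ℝ, Real.sqrt ((((γ' t)ᴴ * γ' t).trace).re) =
        Real.sqrt (((H * H * ρ0).trace).re - (((H * ρ0).trace).re) ^ 2) / ℏ) ∧
    (∀ t : ℝ, 0 ≤ t →
      ∫ s in (0 : ℝ)..t, Real.sqrt ((((γ' s)ᴴ * γ' s).trace).re) =
        t * Real.sqrt ((((H - (lam : ℂ) • 1) * (H - (lam : ℂ) • 1) * ρ0).trace).re) / ℏ) :=
  speed_of_evolution_curve_general ℏ hℏ lam H ρ0 W hH htr hW γ hγ γ' hγ'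
end
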